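/- arXiv:1912.01154 — 6 statements merged into one kernel-verified Lean document; each statement's English description precedes it below -/
import Mathlib

section
/- Let f be a 1-periodic wall motion that is C¹ on (0,1) with bounded derivative and let g > 0. Define the energy-change (winding) function γ : [0,1) × [0,g) → ℤ by γ(t̃, ṽ) = ⌊(ṽ + 2ḟ(t̃₁))/g⌋ where t̃₁ is the fractional part of t̃ + 2ṽ/g. Then ∫₀^g ∫₀^1 γ(t̃, ṽ) dt̃ dṽ = 0, i.e., the energy change of the limit map F∞ has zero average with respect to μ̃. -/
open MeasureTheory Filter Set

/-- The energy-change (winding) function of the limit map: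
`γ(t̃, ṽ) = ⌊(ṽ + 2ḟ(t̃₁))/g⌋` where `t̃₁ = frac(t̃ + 2ṽ/g)`. -/
noncomputable def windingNumber (f : ℝ → ℝ) (g : ℝ) (p : ℝ × ℝ) : ℤ :=
  ⌊(p.2 + 2 * deriv f (Int.fract (p.1 + 2 * p.2 / g))) / g⌋

/-!
For fixed `ṽ`, `t̃ ↦ γ(t̃, ṽ)` is the translate by `2ṽ/g` of the 1-periodic function
`t̃ ↦ ⌊(ṽ + 2ḟ(t̃))/g⌋`, so the shear disappears from its integral over a period. After exchanging
the integrals, `∫₀^g ⌊(ṽ + a)/g⌋ dṽ = a` for every real `a` (as `⌊x⌋ = x - fract x` and `fract`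
has mean `1/2` over any period), which leaves `∫₀^1 2ḟ = 2 (f 1 - f 0) = 0`.
-/

theorem integral_Ico_eq_intervalIntegral {E : Type*} [NormedAddCommGroup E] [NormedSpace ℝ E]
    {f : ℝ → E} {a b : ℝ} (hab : a ≤ b) :
    ∫ x in Ico a b, f x = ∫ x in a..b, f x := by
  rw [integral_Ico_eq_integral_Ioc, intervalIntegral.integral_of_le hab]

theorem Function.Periodic.intervalIntegral_comp_add_right {E : Type*} [NormedAddCommGroup E]
    [NormedSpace ℝ E] {f : ℝ → E} {T : ℝ} (hf : Function.Periodic f T) (a : ℝ) :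
    ∫ x in (0 : ℝ)..T, f (x + a) = ∫ x in (0 : ℝ)..T, f x := by
  rw [intervalIntegral.integral_comp_add_right, zero_add, add_comm, hf.intervalIntegral_add_eq a 0,
    zero_add]

theorem intervalIntegral_fract : ∫ x in (0 : ℝ)..1, Int.fract x = 1 / 2 := by
  rw [← integral_Ico_eq_intervalIntegral zero_le_one, integral_Ico_eq_integral_Ioo,
    setIntegral_congr_fun measurableSet_Ioo fun x hx => Int.fract_eq_self.2 ⟨hx.1.le, hx.2⟩,
    ← integral_Ioc_eq_integral_Ioo, ← intervalIntegral.integral_of_le zero_le_one, integral_id]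
  norm_num

theorem intervalIntegral_floor_add (b : ℝ) : ∫ x in (0 : ℝ)..1, (⌊x + b⌋ : ℝ) = b := by
  have hfloor : IntervalIntegrable (fun x : ℝ => (⌊x + b⌋ : ℝ)) volume 0 1 :=
    Monotone.intervalIntegrable fun x y hxy => by gcongr
  have hlin : IntervalIntegrable (fun x : ℝ => x + b) volume 0 1 :=
    (continuous_id.add continuous_const).intervalIntegrable 0 1
  have hfract : ∫ x in (0 : ℝ)..1, Int.fract (x + b) = 1 / 2 :=
    ((Int.fract_periodic ℝ).intervalIntegral_comp_add_right b).trans intervalIntegral_fract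
  have hlinint : ∫ x in (0 : ℝ)..1, x + b = 1 / 2 + b := by
    rw [intervalIntegral.integral_comp_add_right (fun x => x), integral_id]
    ring
  have hsplit := intervalIntegral.integral_sub hlin hfloor
  simp only [← Int.fract.eq_1, hfract, hlinint] at hsplit
  linarith

theorem intervalIntegral_floor_add_div {g : ℝ} (hg : 0 < g) (a : ℝ) :
    ∫ v in (0 : ℝ)..g, (⌊(v + a) / g⌋ : ℝ) = a := by
  simp only [add_div]
  rw [intervalIntegral.integral_comp_div (fun u => (⌊u + a / g⌋ : ℝ)) hg.ne', zero_div,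
    div_self hg.ne', intervalIntegral_floor_add, smul_eq_mul, mul_div_cancel₀ _ hg.ne']

theorem MeasureTheory.Integrable.floor {α : Type*} [MeasurableSpace α] {μ : Measure α}
    [IsFiniteMeasure μ] {φ : α → ℝ} (hφ : Integrable φ μ) :
    Integrable (fun x => (⌊φ x⌋ : ℝ)) μ := by
  refine Integrable.mono' (hφ.abs.add (integrable_const 1)) ?_ (ae_of_all _ fun x => ?_)
  · exact (measurable_from_top.comp_aemeasurable
      (Int.measurable_floor.comp_aemeasurable hφ.aemeasurable)).aestronglyMeasurable
  · rw [Pi.add_apply, Real.norm_eq_abs, abs_le]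
    constructor <;> cases abs_cases (φ x) <;>
      linarith [Int.floor_le (φ x), Int.lt_floor_add_one (φ x)]

section Shear

variable {D : ℝ → ℝ} {C g : ℝ}

theorem integrable_floor_shear (hDm : Measurable D) (hDC : ∀ t, |D t| ≤ C) (c : ℝ) :
    Integrable (fun p : ℝ × ℝ => (⌊(p.2 + D (p.1 + c * p.2)) / g⌋ : ℝ))
      ((volume.restrict (Ico 0 1)).prod (volume.restrict (Ico 0 g))) := by
  refine Integrable.floor (Integrable.div_const (Integrable.add ?_ ?_) g)
  · exact Integrable.comp_snd (continuous_id.integrableOn_Icc.mono_set Ico_subset_Icc_self) _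
  · exact Integrable.of_bound (hDm.comp (by fun_prop)).aestronglyMeasurable C
      (ae_of_all _ fun p => (Real.norm_eq_abs _).trans_le (hDC _))

theorem setIntegral_floor_shear (hDper : Function.Periodic D 1) (hDm : Measurable D)
    (hDC : ∀ t, |D t| ≤ C) (hg : 0 < g) (c : ℝ) :
    ∫ p in Ico (0 : ℝ) 1 ×ˢ Ico (0 : ℝ) g, (⌊(p.2 + D (p.1 + c * p.2)) / g⌋ : ℝ) =
      ∫ t in Ico (0 : ℝ) 1, D t := by
  have hF := integrable_floor_shear (g := g) hDm hDC c
  have hG := integrable_floor_shear (g := g) hDm hDC 0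
  simp only [zero_mul, add_zero] at hG
  calc ∫ p in Ico (0 : ℝ) 1 ×ˢ Ico (0 : ℝ) g, (⌊(p.2 + D (p.1 + c * p.2)) / g⌋ : ℝ)
      = ∫ t in Ico (0 : ℝ) 1, ∫ v in Ico (0 : ℝ) g, (⌊(v + D (t + c * v)) / g⌋ : ℝ) := by
        rw [Measure.volume_eq_prod,
          setIntegral_prod _ (by rwa [IntegrableOn, ← Measure.prod_restrict])]
    _ = ∫ v in Ico (0 : ℝ) g, ∫ t in Ico (0 : ℝ) 1, (⌊(v + D (t + c * v)) / g⌋ : ℝ) :=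
        integral_integral_swap hF
    _ = ∫ v in Ico (0 : ℝ) g, ∫ t in Ico (0 : ℝ) 1, (⌊(v + D t) / g⌋ : ℝ) := by
        refine integral_congr_ae (ae_of_all _ fun v => ?_)
        simp only [integral_Ico_eq_intervalIntegral zero_le_one]
        exact (hDper.comp fun d => (⌊(v + d) / g⌋ : ℝ)).intervalIntegral_comp_add_right (c * v)
    _ = ∫ t in Ico (0 : ℝ) 1, ∫ v in Ico (0 : ℝ) g, (⌊(v + D t) / g⌋ : ℝ) :=
        (integral_integral_swap hG).symm
    _ = ∫ t in Ico (0 : ℝ) 1, D t := by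
        refine integral_congr_ae (ae_of_all _ fun t => ?_)
        dsimp only
        rw [integral_Ico_eq_intervalIntegral hg.le, intervalIntegral_floor_add_div hg]

end Shear

theorem intervalIntegral_deriv_eq_zero_of_periodic {f : ℝ → ℝ} {T : ℝ} (hT : 0 ≤ T)
    (hper : Function.Periodic f T) (hcont : ContinuousOn f (Icc 0 T))
    (hdiff : DifferentiableOn ℝ f (Ioo 0 T)) (hint : IntervalIntegrable (deriv f) volume 0 T) :
    ∫ x in (0 : ℝ)..T, deriv f x = 0 := by
  rw [intervalIntegral.integral_eq_sub_of_hasDerivAt_of_le hT hcont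
    (fun x hx => (hdiff.differentiableAt (isOpen_Ioo.mem_nhds hx)).hasDerivAt) hint,
    ← zero_add T, hper 0, sub_self]

/-- The energy change of the limit map `F∞` has zero average with respect to the
Lebesgue measure `μ̃ = dt̃ dṽ` on the torus:
`∫₀^g ∫₀^1 γ(t̃, ṽ) dt̃ dṽ = 0`. -/
theorem windingNumber_average_zero (f : ℝ → ℝ) (g : ℝ) (hg : 0 < g)
    (hcont : Continuous f)
    (hper : ∀ t, f (t + 1) = f t)
    (hC1 : ContDiffOn ℝ 1 f (Set.Ioo (0 : ℝ) 1))
    (hbd : ∃ L : ℝ, ∀ t ∈ Set.Ioo (0 : ℝ) 1, |deriv f t| ≤ L) :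
    ∫ p in Set.Ico (0 : ℝ) 1 ×ˢ Set.Ico (0 : ℝ) g,
      ((windingNumber f g p : ℤ) : ℝ) ∂volume = 0 := by
  obtain ⟨L, hL⟩ := hbd
  have hbound : ∀ t, |2 * deriv f (Int.fract t)| ≤ 2 * max L |deriv f 0| := by
    intro t
    rw [abs_mul, abs_two]
    gcongr
    rcases (Int.fract_nonneg t).eq_or_lt with h | h
    · rw [← h]
      exact le_max_right _ _
    · exact (hL _ ⟨h, Int.fract_lt_one t⟩).trans (le_max_left _ _)
  have hint : IntervalIntegrable (deriv f) volume 0 1 := by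
    rw [intervalIntegrable_iff_integrableOn_Ioo_of_le zero_le_one]
    exact Measure.integrableOn_of_bounded measure_Ioo_lt_top.ne
      (measurable_deriv f).aestronglyMeasurable
      ((ae_restrict_iff' measurableSet_Ioo).2 (ae_of_all _ hL))
  have hshear := setIntegral_floor_shear (D := fun t => 2 * deriv f (Int.fract t))
    (fun t => by simp only [Int.fract_add_one]) (by fun_prop) hbound hg (2 / g)
  simp only [windingNumber, mul_div_right_comm]
  rw [hshear, setIntegral_congr_fun measurableSet_Ico fun t ht => by rw [Int.fract_eq_self.2 ht],
    integral_Ico_eq_intervalIntegral zero_le_one, intervalIntegral.integral_const_mul,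
    intervalIntegral_deriv_eq_zero_of_periodic zero_le_one hper hcont.continuousOn
      (hC1.differentiableOn one_ne_zero) hint, mul_zero]
end

section
/- Let g > 0 and k > 0, and let M be the 2×2 matrix M = [[1, 2/g], [2k, 1 + 4k/g]] (the derivative of the limit map F̃∞ when f̈ = k at the image point). Then: (i) M strictly preserves the positive cone, i.e. for every nonzero (a,b) with ab ≥ 0, the image (ā,b̄) = M(a,b) satisfies āb̄ > 0; and (ii) noncontraction holds on the positive cone: ‖M(a,b)‖ ≥ ‖(a,b)‖ for every (a,b) with ab ≥ 0, where ‖·‖ is the Euclidean norm. -/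
/-- For `g > 0`, `k > 0`, the matrix `M = [[1, 2/g], [2k, 1 + 4k/g]]` (the derivative of
the limit map `F̃∞`) strictly preserves the positive cone `{(a,b) : ab ≥ 0}` and is
noncontracting on it (in the Euclidean norm). -/
theorem limit_derivative_positive_cone (g k : ℝ) (hg : 0 < g) (hk : 0 < k) :
    (∀ a b : ℝ, (a, b) ≠ ((0 : ℝ), (0 : ℝ)) → 0 ≤ a * b →
      0 < (a + 2 / g * b) * (2 * k * a + (1 + 4 * k / g) * b)) ∧
    (∀ a b : ℝ, 0 ≤ a * b →
      Real.sqrt (a ^ 2 + b ^ 2) ≤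
        Real.sqrt ((a + 2 / g * b) ^ 2 + (2 * k * a + (1 + 4 * k / g) * b) ^ 2)) := by
  constructor
  · intro a b hne hab
    have h1 : (0:ℝ) < 2 / g := by positivity
    have h2 : (0:ℝ) < 4 * k / g := by positivity
    have hpos : 0 < 2 * k * a ^ 2 + 2 / g * b ^ 2 := by
      rcases eq_or_ne a 0 with ha | ha
      · have hb : b ≠ 0 := by
          intro hb; exact hne (by simp [ha, hb])
        have : 0 < b ^ 2 := by positivity
        nlinarith [sq_nonneg a]
      · have : 0 < a ^ 2 := by positivity
        nlinarith [sq_nonneg b]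
    nlinarith [mul_nonneg hab h1.le, mul_nonneg hab h2.le,
      mul_nonneg (mul_nonneg h1.le h2.le) (sq_nonneg b),
      mul_nonneg (mul_nonneg h1.le hk.le) hab, hab]
  · intro a b hab
    apply Real.sqrt_le_sqrt
    have h1 : (0:ℝ) < 2 / g := by positivity
    have h2 : (0:ℝ) < 4 * k / g := by positivity
    nlinarith [mul_nonneg hab h1.le, mul_nonneg hab h2.le, sq_nonneg (2/g*b),
      mul_nonneg (mul_nonneg hk.le hab) h2.le, sq_nonneg (2*k*a),
      mul_nonneg hab hk.le, sq_nonneg (4*k/g*b), mul_nonneg h2.le (sq_nonneg b),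
      mul_nonneg (mul_nonneg h2.le h2.le) (sq_nonneg b)]
end

section
/- Let g > 0 and let k₀ < −g and k₁ < −g. Let M = [[1, 2/g], [2k₁, 1 + 4k₁/g]]. If (δt, δv) satisfies δt ≠ 0 and δv/δt ≤ k₀, then the image (δ̄t, δ̄v) = M(δt, δv) satisfies δ̄t ≠ 0 and δ̄v/δ̄t = 2k₁ + (δv/δt)/(1 + (2/g)(δv/δt)) ≤ 2k₁ + k₀/(1 + 2k₀/g) < 2k₁ + g < k₁. In particular the unstable cone {δv/δt ≤ k₀} at a point with f̈ = k₀ is mapped strictly into the unstable cone {δv/δt ≤ k₁} at its image, where f̈ = k₁. -/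
/-!
The matrix factors as the shear `[[1, 0], [2k₁, 1]]` after the shear `[[1, 2/g], [0, 1]]`, so on
slopes `s = δv/δt` it acts as `s ↦ 2k₁ + s / (1 + (2/g) s)`. On the half-line `1 + (2/g) s < 0`,
which contains `s ≤ k₀`, the Möbius map `s ↦ s / (1 + (2/g) s)` is increasing, and at `s = k₀`
its value is below `g` exactly because `k₀ < -g`.
-/

lemma shear_slope_eq {b c x y : ℝ} (hx : x ≠ 0) (hxy : x + b * y ≠ 0) :
    (c * x + (1 + c * b) * y) / (x + b * y) = c + (y / x) / (1 + b * (y / x)) := by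
  rw [show 1 + b * (y / x) = (x + b * y) / x by field_simp, div_div_div_cancel_right₀ hx]
  field_simp
  ring

lemma div_one_add_mul_le_div_one_add_mul {b s t : ℝ} (hb : 0 ≤ b) (hst : s ≤ t)
    (ht : 1 + b * t < 0) : s / (1 + b * s) ≤ t / (1 + b * t) := by
  have hs : 1 + b * s < 0 := by nlinarith
  have hdiff : t / (1 + b * t) - s / (1 + b * s) = (t - s) / ((1 + b * t) * (1 + b * s)) := by
    rw [div_sub_div _ _ ht.ne hs.ne]
    ring
  have : 0 ≤ (t - s) / ((1 + b * t) * (1 + b * s)) :=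
    div_nonneg (sub_nonneg.2 hst) (mul_pos_of_neg_of_neg ht hs).le
  linarith

lemma div_one_add_two_div_mul_lt {g t : ℝ} (hg : 0 < g) (ht : t < -g) :
    t / (1 + 2 / g * t) < g := by
  have hden : 1 + 2 / g * t = (g + 2 * t) / g := by field_simp
  rw [hden, div_div_eq_mul_div, div_lt_iff_of_neg (by linarith)]
  nlinarith

/-- For `g > 0` and `k₀, k₁ < -g`, the matrix `M = [[1, 2/g], [2k₁, 1 + 4k₁/g]]` maps
the unstable cone `{δv/δt ≤ k₀}` strictly into the unstable cone `{δv/δt ≤ k₁}`: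
if `δt ≠ 0` and `δv/δt ≤ k₀`, then writing `(δ̄t, δ̄v) = M (δt, δv)` we have `δ̄t ≠ 0` and
`δ̄v/δ̄t = 2k₁ + (δv/δt)/(1 + (2/g)(δv/δt)) ≤ 2k₁ + k₀/(1 + 2k₀/g) < 2k₁ + g < k₁`. -/
theorem unstable_cone_strictly_invariant (g k₀ k₁ δt δv : ℝ)
    (hg : 0 < g) (hk₀ : k₀ < -g) (hk₁ : k₁ < -g)
    (hδt : δt ≠ 0) (hcone : δv / δt ≤ k₀) :
    δt + 2 / g * δv ≠ 0 ∧
    (2 * k₁ * δt + (1 + 4 * k₁ / g) * δv) / (δt + 2 / g * δv) =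
      2 * k₁ + (δv / δt) / (1 + 2 / g * (δv / δt)) ∧
    2 * k₁ + (δv / δt) / (1 + 2 / g * (δv / δt)) ≤ 2 * k₁ + k₀ / (1 + 2 * k₀ / g) ∧
    2 * k₁ + k₀ / (1 + 2 * k₀ / g) < 2 * k₁ + g ∧
    2 * k₁ + g < k₁ := by
  have hb : 0 ≤ 2 / g := by positivity
  have hden₀ : 1 + 2 / g * k₀ < 0 := by
    have := mul_lt_mul_of_pos_left hk₀ (div_pos two_pos hg)
    rw [mul_neg, div_mul_cancel₀ 2 hg.ne'] at this
    linarith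
  have hden : 1 + 2 / g * (δv / δt) < 0 := by
    linarith [mul_le_mul_of_nonneg_left hcone hb]
  have hne : δt + 2 / g * δv ≠ 0 := by
    rw [show δt + 2 / g * δv = δt * (1 + 2 / g * (δv / δt)) by field_simp]
    exact mul_ne_zero hδt hden.ne
  rw [show 1 + 4 * k₁ / g = 1 + 2 * k₁ * (2 / g) by ring, show 2 * k₀ / g = 2 / g * k₀ by ring]
  refine ⟨hne, shear_slope_eq hδt hne, ?_, ?_, by linarith⟩
  · exact add_le_add_right (div_one_add_mul_le_div_one_add_mul hb hcone hden₀) _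
  · exact add_lt_add_right (div_one_add_two_div_mul_lt hg hk₀) _
end

section
/- Let g > 0 and k ≥ k_min > 0, and let M = [[1, 2/g], [2k, 1 + 4k/g]]. Then for every (a,b) with ab ≥ 0, writing (ā,b̄) = M(a,b), one has ā² + b̄² ≥ Λ₁² (a² + b²), where Λ₁² = min{ 1 + 4k_min², 4/g² + (1 + 4k_min/g)² } > 1. In particular, vectors in the positive cone are uniformly expanded by the derivative of the limit map F̃∞ when f̈ ≥ k_min > 0. -/
private lemma aux_expand (u kmin k a b : ℝ) (hu : 0 < u) (hkmin : 0 < kmin)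
    (hk : kmin ≤ k) (hab : 0 ≤ a * b) :
    min (1 + 4 * kmin ^ 2) (4 * u ^ 2 + (1 + 4 * kmin * u) ^ 2) * (a ^ 2 + b ^ 2) ≤
      (a + 2 * u * b) ^ 2 + (2 * k * a + (1 + 4 * k * u) * b) ^ 2 := by
  have hk0 : 0 < k := lt_of_lt_of_le hkmin hk
  have step1 : min (1 + 4 * kmin ^ 2) (4 * u ^ 2 + (1 + 4 * kmin * u) ^ 2) * (a ^ 2 + b ^ 2) ≤
      (1 + 4 * kmin ^ 2) * a ^ 2 + (4 * u ^ 2 + (1 + 4 * kmin * u) ^ 2) * b ^ 2 := by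
    have := mul_le_mul_of_nonneg_right (min_le_left (1 + 4 * kmin ^ 2)
      (4 * u ^ 2 + (1 + 4 * kmin * u) ^ 2)) (sq_nonneg a)
    have := mul_le_mul_of_nonneg_right (min_le_right (1 + 4 * kmin ^ 2)
      (4 * u ^ 2 + (1 + 4 * kmin * u) ^ 2)) (sq_nonneg b)
    nlinarith
  refine step1.trans ?_
  nlinarith [mul_nonneg hab hu.le, mul_nonneg hab hk0.le,
    mul_nonneg (mul_nonneg (mul_nonneg hab hk0.le) hk0.le) hu.le,
    mul_nonneg (mul_nonneg (sub_nonneg.2 hk) (by linarith : (0:ℝ) ≤ k + kmin)) (sq_nonneg a),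
    mul_nonneg (mul_nonneg (sub_nonneg.2 hk) hu.le) (sq_nonneg b),
    mul_nonneg (mul_nonneg (mul_nonneg (sub_nonneg.2 hk) (by linarith : (0:ℝ) ≤ k + kmin))
      (sq_nonneg u)) (sq_nonneg b)]

/-- Uniform expansion on the positive cone: for `g > 0` and `k ≥ k_min > 0`, the matrix
`M = [[1, 2/g], [2k, 1 + 4k/g]]` satisfies `‖M(a,b)‖² ≥ Λ₁² (a² + b²)` for all `(a,b)`
with `ab ≥ 0`, where `Λ₁² = min{1 + 4k_min², 4/g² + (1 + 4k_min/g)²} > 1`. -/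
theorem uniform_expansion_positive_cone (g kmin k : ℝ)
    (hg : 0 < g) (hkmin : 0 < kmin) (hk : kmin ≤ k) :
    1 < min (1 + 4 * kmin ^ 2) (4 / g ^ 2 + (1 + 4 * kmin / g) ^ 2) ∧
    ∀ a b : ℝ, 0 ≤ a * b →
      min (1 + 4 * kmin ^ 2) (4 / g ^ 2 + (1 + 4 * kmin / g) ^ 2) * (a ^ 2 + b ^ 2) ≤
        (a + 2 / g * b) ^ 2 + (2 * k * a + (1 + 4 * k / g) * b) ^ 2 := by
  have hu : 0 < g⁻¹ := inv_pos.2 hg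
  have e1 : 4 / g ^ 2 = 4 * g⁻¹ ^ 2 := by rw [div_eq_mul_inv, inv_pow]
  have e2 : 4 * kmin / g = 4 * kmin * g⁻¹ := by rw [div_eq_mul_inv]
  have e3 : (2:ℝ) / g = 2 * g⁻¹ := by rw [div_eq_mul_inv]
  have e4 : 4 * k / g = 4 * k * g⁻¹ := by rw [div_eq_mul_inv]
  rw [e1, e2, e3, e4]
  constructor
  · apply lt_min
    · nlinarith [sq_nonneg kmin]
    · nlinarith [sq_nonneg g⁻¹, mul_pos hkmin hu, sq_nonneg (kmin * g⁻¹)]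
  · exact fun a b hab => aux_expand g⁻¹ kmin k a b hu hkmin hk hab
end

section
/- Let g > 0 and k ≥ k_min > 0, and let M⁻¹ = [[1 + 4k/g, −2/g], [−2k, 1]] (the inverse of M = [[1, 2/g], [2k, 1 + 4k/g]]). Then for every (a,b) with ab ≤ 0, writing (ã,b̃) = M⁻¹(a,b), one has ã² + b̃² ≥ Λ₂² (a² + b²), where Λ₂² = min{ 4k_min² + (1 + 4k_min/g)², 4/g² + 1 } > 1. In particular, vectors in the negative cone are uniformly expanded by the inverse derivative of the limit map F̃∞ when f̈ ≥ k_min > 0. -/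
/-- Uniform expansion on the negative cone by the inverse derivative: for `g > 0` and
`k ≥ k_min > 0`, the matrix `M⁻¹ = [[1 + 4k/g, −2/g], [−2k, 1]]` satisfies
`‖M⁻¹(a,b)‖² ≥ Λ₂² (a² + b²)` for all `(a,b)` with `ab ≤ 0`, where
`Λ₂² = min{4k_min² + (1 + 4k_min/g)², 4/g² + 1} > 1`. -/
theorem uniform_expansion_negative_cone (g kmin k : ℝ)
    (hg : 0 < g) (hkmin : 0 < kmin) (hk : kmin ≤ k) :
    1 < min (4 * kmin ^ 2 + (1 + 4 * kmin / g) ^ 2) (4 / g ^ 2 + 1) ∧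
    ∀ a b : ℝ, a * b ≤ 0 →
      min (4 * kmin ^ 2 + (1 + 4 * kmin / g) ^ 2) (4 / g ^ 2 + 1) * (a ^ 2 + b ^ 2) ≤
        ((1 + 4 * k / g) * a - 2 / g * b) ^ 2 + (-(2 * k) * a + b) ^ 2 := by
  have hg2 : (0:ℝ) < g ^ 2 := by positivity
  have hkg : 0 < 4 * kmin / g := by positivity
  constructor
  · apply lt_min
    · nlinarith [sq_nonneg kmin, sq_nonneg (4 * kmin / g)]
    · have : 0 < 4 / g ^ 2 := by positivity
      linarith
  · intro a b hab
    have hk0 : 0 < k := lt_of_lt_of_le hkmin hk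
    have h1 : min (4 * kmin ^ 2 + (1 + 4 * kmin / g) ^ 2) (4 / g ^ 2 + 1)
        ≤ 4 * kmin ^ 2 + (1 + 4 * kmin / g) ^ 2 := min_le_left _ _
    have h2 : min (4 * kmin ^ 2 + (1 + 4 * kmin / g) ^ 2) (4 / g ^ 2 + 1)
        ≤ 4 / g ^ 2 + 1 := min_le_right _ _
    -- monotonicity in k
    have hmono : 4 * kmin ^ 2 + (1 + 4 * kmin / g) ^ 2 ≤ 4 * k ^ 2 + (1 + 4 * k / g) ^ 2 := by
      have h : 4 * kmin / g ≤ 4 * k / g := by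
        gcongr
      nlinarith [sq_nonneg (k - kmin), hkg]
    have hcross : 0 ≤ -((4 * (1 + 4 * k / g) / g + 4 * k) * (a * b)) := by
      have : 0 < 4 * (1 + 4 * k / g) / g + 4 * k := by positivity
      nlinarith
    have hca : min (4 * kmin ^ 2 + (1 + 4 * kmin / g) ^ 2) (4 / g ^ 2 + 1) * a ^ 2
        ≤ (4 * k ^ 2 + (1 + 4 * k / g) ^ 2) * a ^ 2 := by
      apply mul_le_mul_of_nonneg_right (le_trans h1 hmono) (sq_nonneg a)
    have hcb : min (4 * kmin ^ 2 + (1 + 4 * kmin / g) ^ 2) (4 / g ^ 2 + 1) * b ^ 2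
        ≤ (4 / g ^ 2 + 1) * b ^ 2 := by
      apply mul_le_mul_of_nonneg_right h2 (sq_nonneg b)
    have hexp : ((1 + 4 * k / g) * a - 2 / g * b) ^ 2 + (-(2 * k) * a + b) ^ 2 =
        (4 * k ^ 2 + (1 + 4 * k / g) ^ 2) * a ^ 2 + (4 / g ^ 2 + 1) * b ^ 2
          - (4 * (1 + 4 * k / g) / g + 4 * k) * (a * b) := by
      field_simp
      ring
    nlinarith [hca, hcb, hcross, hexp]
end

section
/- Existence and asymptotics of the flight time: let f : ℝ → ℝ be 1-periodic, bounded, and piecewise C¹ with |ḟ| ≤ L, and let g > 0. Then there exist constants v* > 0 and C > 0 (depending only on g, L and sup|f|) such that for every t ∈ ℝ and every v ≥ v*, the set {s > 0 : f(t) + v s − (g/2)s² = f(t+s)} is nonempty, and its least element s(t,v) satisfies |s(t,v) − 2v/g| ≤ C/v. Consequently the next collision time of the pingpong satisfies t̄ = t + 2v/g + O(1/v) as v → ∞. -/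
set_option maxHeartbeats 1000000


/-- Existence and asymptotics of the flight time: for a 1-periodic wall motion `f`,
bounded by `M` and `L`-Lipschitz (piecewise `C¹` with `|ḟ| ≤ L`), there are constants
`v* > 0` and `C > 0`, depending only on `g`, `L` and `M`, such that for all `t` and all
`v ≥ v*` the collision set `{s > 0 : f(t) + v s − (g/2)s² = f(t+s)}` is nonempty, its
infimum is attained (it has a least element `s(t,v)`), and `|s(t,v) − 2v/g| ≤ C/v`. -/
theorem flight_time_exists_and_asymptotics (g L M : ℝ)
    (hg : 0 < g) (hL : 0 ≤ L) (hM : 0 ≤ M) :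
    ∃ vstar C : ℝ, 0 < vstar ∧ 0 < C ∧
      ∀ f : ℝ → ℝ, (∀ t, f (t + 1) = f t) →
        LipschitzWith (Real.toNNReal L) f →
        (∀ t, |f t| ≤ M) →
        ∀ t v : ℝ, vstar ≤ v →
          {s : ℝ | 0 < s ∧ f t + v * s - g / 2 * s ^ 2 = f (t + s)}.Nonempty ∧
          sInf {s : ℝ | 0 < s ∧ f t + v * s - g / 2 * s ^ 2 = f (t + s)} ∈
            {s : ℝ | 0 < s ∧ f t + v * s - g / 2 * s ^ 2 = f (t + s)} ∧
          |sInf {s : ℝ | 0 < s ∧ f t + v * s - g / 2 * s ^ 2 = f (t + s)} - 2 * v / g| ≤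
            C / v := by
  set C : ℝ := 4 * M + 1 with hCdef
  have hC : 0 < C := by positivity
  refine ⟨2 * L + 1 + C * g + 4 * M * g, C, by positivity, hC, ?_⟩
  intro f hper hlip hbnd t v hv
  -- basic bounds on v
  have hCg : 0 ≤ C * g := by positivity
  have hMg : 0 ≤ 4 * M * g := by positivity
  have hv1 : 1 ≤ v := by linarith
  have hv0 : 0 < v := by linarith
  have hv2L : 2 * L ≤ v := by linarith
  have hvCg : C * g ≤ v := by linarith
  have hv4Mg : 4 * M * g + 1 ≤ v := by linarith
  -- Lipschitz estimate
  have hfd : ∀ x y : ℝ, |f x - f y| ≤ L * |x - y| := by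
    intro x y
    have := hlip.dist_le_mul x y
    rwa [Real.dist_eq, Real.dist_eq, Real.coe_toNNReal L hL] at this
  have hfc : Continuous f := hlip.continuous
  set S : Set ℝ := {s : ℝ | 0 < s ∧ f t + v * s - g / 2 * s ^ 2 = f (t + s)} with hSdef
  set b : ℝ := 2 * v / g - C / v with hbdef
  set s₁ : ℝ := 2 * v / g + C / v with hs1def
  have hb0 : 0 < b := by
    rw [hbdef]
    rw [sub_pos, div_lt_div_iff₀ hv0 hg]
    nlinarith
  -- positivity of the gap function below b
  have hpos : ∀ s : ℝ, 0 < s → s ≤ b → f (t + s) < f t + v * s - g / 2 * s ^ 2 := by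
    intro s hs hsb
    have hd : f (t + s) - f t ≤ L * s := by
      have := hfd (t + s) t
      have h2 : |t + s - t| = s := by rw [abs_of_pos]; ring; linarith
      rw [h2] at this
      have := abs_le.mp this
      linarith [this.2]
    rcases lt_or_ge (s * g) (2 * (v - L)) with hcase | hcase
    · nlinarith [mul_pos hs (show (0:ℝ) < 2 * (v - L) - s * g by linarith)]
    · -- here s ≥ 2(v-L)/g, use boundedness
      have hft := abs_le.mp (hbnd t)
      have hfts := abs_le.mp (hbnd (t + s))
      have hsb' : s * (g * v) ≤ 2 * v ^ 2 - C * g := by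
        have : s ≤ 2 * v / g - C / v := hsb
        have h1 : s * (g * v) ≤ (2 * v / g - C / v) * (g * v) := by
          apply mul_le_mul_of_nonneg_right this
          positivity
        calc s * (g * v) ≤ (2 * v / g - C / v) * (g * v) := h1
          _ = 2 * v ^ 2 - C * g := by field_simp
      have h2v : 0 < 2 * v - g * s := by nlinarith
      nlinarith [mul_nonneg (show (0:ℝ) ≤ s * g - 2 * (v - L) by linarith) h2v.le,
        mul_nonneg (show (0:ℝ) ≤ v - 2 * L by linarith) h2v.le]
  -- IVT gives a root in [v/g, s₁]
  set φ : ℝ → ℝ := fun s => f t + v * s - g / 2 * s ^ 2 - f (t + s) with hφdef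
  have hφc : Continuous φ := by
    apply Continuous.sub
    · continuity
    · exact hfc.comp (by continuity)
  have hvg0 : 0 < v / g := by positivity
  have hvgs1 : v / g ≤ s₁ := by
    rw [hs1def]
    have : v / g ≤ 2 * v / g := by
      gcongr <;> linarith
    have hCv : 0 ≤ C / v := by positivity
    linarith
  have hφvg : 0 ≤ φ (v / g) := by
    have hft := abs_le.mp (hbnd t)
    have hfts := abs_le.mp (hbnd (t + v / g))
    have hkey : v * (v / g) - g / 2 * (v / g) ^ 2 = v ^ 2 / (2 * g) := by
      field_simp; ring
    have : 4 * M * g ≤ v ^ 2 := by nlinarith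
    have h2 : 2 * M ≤ v ^ 2 / (2 * g) := by
      rw [le_div_iff₀ (by positivity)]; nlinarith
    show 0 ≤ f t + v * (v / g) - g / 2 * (v / g) ^ 2 - f (t + v / g)
    rw [show f t + v * (v / g) - g / 2 * (v / g) ^ 2 - f (t + v / g)
        = (v * (v / g) - g / 2 * (v / g) ^ 2) + f t - f (t + v / g) by ring, hkey]
    linarith
  have hφs1 : φ s₁ ≤ 0 := by
    have hft := abs_le.mp (hbnd t)
    have hfts := abs_le.mp (hbnd (t + s₁))
    have e1 : g * v * s₁ = 2 * v ^ 2 + C * g := by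
      rw [hs1def]; field_simp
    have hs1pos : 0 < s₁ := by rw [hs1def]; positivity
    have hkey : v * s₁ - g / 2 * s₁ ^ 2 ≤ -C := by
      have h2 : g * s₁ - 2 * v = C * g / v := by
        rw [eq_div_iff hv0.ne']; nlinarith
      have h3 : 2 * v / g ≤ s₁ := by
        have hCv0 : 0 ≤ C / v := by positivity
        rw [hs1def]; linarith
      have h4 : v * s₁ - g / 2 * s₁ ^ 2 = -(s₁ / 2) * (g * s₁ - 2 * v) := by ring
      rw [h4, h2]
      have h5 : 2 * v / g * (C * g / v) ≤ s₁ * (C * g / v) := by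
        apply mul_le_mul_of_nonneg_right h3; positivity
      have h6 : 2 * v / g * (C * g / v) = 2 * C := by field_simp
      nlinarith
    show f t + v * s₁ - g / 2 * s₁ ^ 2 - f (t + s₁) ≤ 0
    linarith
  obtain ⟨r, hrmem, hr0⟩ := intermediate_value_Icc' hvgs1 (hφc.continuousOn)
    (show (0:ℝ) ∈ Set.Icc (φ s₁) (φ (v / g)) from ⟨hφs1, hφvg⟩)
  have hrS : r ∈ S := by
    refine ⟨lt_of_lt_of_le hvg0 hrmem.1, ?_⟩
    have h : f t + v * r - g / 2 * r ^ 2 - f (t + r) = 0 := hr0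
    linarith
  have hne : S.Nonempty := ⟨r, hrS⟩
  -- S is closed: S = {s | eq} ∩ Ici b
  have hSeq : S = {s : ℝ | f t + v * s - g / 2 * s ^ 2 = f (t + s)} ∩ Set.Ici b := by
    ext s
    constructor
    · rintro ⟨hs0, hs⟩
      refine ⟨hs, ?_⟩
      rcases le_or_gt b s with h | h
      · exact h
      · exact absurd hs (ne_of_gt (hpos s hs0 h.le))
    · rintro ⟨hs, hsb⟩
      exact ⟨lt_of_lt_of_le hb0 hsb, hs⟩
  have hSclosed : IsClosed S := by
    rw [hSeq]
    exact IsClosed.inter (isClosed_eq (by continuity) (hfc.comp (by continuity))) isClosed_Ici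
  have hbdd : BddBelow S := ⟨0, fun x hx => hx.1.le⟩
  have hinf_mem : sInf S ∈ S := hSclosed.csInf_mem hne hbdd
  refine ⟨hne, hinf_mem, ?_⟩
  have hlow : b ≤ sInf S := by
    have h := hinf_mem
    rw [hSeq] at h ⊢
    exact h.2
  have hhigh : sInf S ≤ s₁ := le_trans (csInf_le hbdd hrS) hrmem.2
  rw [abs_le]
  constructor
  · rw [hbdef] at hlow; linarith
  · rw [hs1def] at hhigh; linarith
end
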